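/- arXiv:2604.06915 — 2 statements merged into one kernel-verified Lean document; each statement's English description precedes it below -/
import Mathlib

section
/- Let G be a finite group acting on a set χ, X a χ-valued random element whose distribution is G-invariant, and f: χ → R measurable. Let f^{(1)}(X) ≤ ... ≤ f^{(|G|)}(X) be the sorted values of f(g(X)), g ∈ G. Then for any k ∈ {1,...,|G|}, P(f(X) > f^{(k)}(X)) ≤ (|G| − k)/|G|. -/
/-!
Let `A = {x | kthOrder (fun g => f (g • x)) k < f x}`. The orbit of `h • x` is the orbit of `x`,
so `h • x ∈ A` says that `f (h • x)` exceeds the `k`-th smallest of the orbit values, which happens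
for at most `|G| - k` elements `h`. By invariance every event `h • X ∈ A` has the probability of
`X ∈ A`, hence `|G| · P(X ∈ A) = E #{h | h • X ∈ A} ≤ |G| - k`.
-/

open MeasureTheory ProbabilityTheory

/-- The `k`-th order statistic (1-based) of the finitely many values `f g`, `g : G`. -/
noncomputable def kthOrder {G : Type*} [Fintype G] (f : G → ℝ) (k : ℕ) : ℝ :=
  ((Finset.univ.val.map f).sort (· ≤ ·)).getD (k - 1) 0

open Finset

namespace List

variable {α : Type*} {l : List α} {i : ℕ}

theorem countP_take_add_countP_cons_drop (hi : i < l.length) (p : α → Bool) :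
    (l.take i).countP p + (l[i] :: l.drop (i + 1)).countP p = l.countP p := by
  rw [← drop_eq_getElem_cons hi, ← countP_append, take_append_drop]

variable [LinearOrder α]

theorem Pairwise.le_getElem_of_mem_take (hl : l.Pairwise (· ≤ ·)) (hi : i < l.length) {a : α}
    (ha : a ∈ l.take i) : a ≤ l[i] :=
  hl.rel_of_mem_take_of_mem_drop ha (by rw [drop_eq_getElem_cons hi]; exact mem_cons_self)

theorem Pairwise.getElem_le_of_mem_drop (hl : l.Pairwise (· ≤ ·)) (hi : i < l.length) {a : α}
    (ha : a ∈ l.drop (i + 1)) : l[i] ≤ a := by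
  have hdrop := hl.drop (i := i)
  rw [drop_eq_getElem_cons hi, pairwise_cons] at hdrop
  exact hdrop.1 a ha

theorem Pairwise.countP_getElem_lt_le (hl : l.Pairwise (· ≤ ·)) (hi : i < l.length) :
    l.countP (fun a => l[i] < a) ≤ l.length - (i + 1) := by
  rw [← countP_take_add_countP_cons_drop hi,
    countP_eq_zero.mpr fun a ha => by simpa using hl.le_getElem_of_mem_take hi ha, countP_cons]
  simpa using countP_le_length (l := l.drop (i + 1))

theorem Pairwise.getElem_lt_iff_lt_countP (hl : l.Pairwise (· ≤ ·)) (hi : i < l.length)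
    (c : α) : l[i] < c ↔ i < l.countP (· < c) := by
  rw [← countP_take_add_countP_cons_drop hi, countP_cons]
  constructor
  · intro h
    rw [countP_eq_length.mpr fun a ha => by
      simpa using (hl.le_getElem_of_mem_take hi ha).trans_lt h]
    simp [h, hi.le]
  · intro h
    by_contra! hc
    rw [(countP_eq_zero (l := l.drop (i + 1))).mpr fun a ha => by
      simpa using hc.trans (hl.getElem_le_of_mem_drop hi ha)] at h
    simp only [not_lt.mpr hc, decide_false, Bool.false_eq_true, if_false] at h
    have := (countP_le_length (p := (· < c))).trans (length_take_le i l)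
    omega

end List

section kthOrder

variable {G : Type*} [Fintype G] {k : ℕ}

theorem countP_sort_map_univ {α : Type*} [LinearOrder α] (v : G → α) (p : α → Prop)
    [DecidablePred p] : ((univ.val.map v).sort (· ≤ ·)).countP (p ·) = #{g | p (v g)} := by
  rw [← Multiset.coe_countP, Multiset.sort_eq, Multiset.countP_map]
  rfl

theorem kthOrder_eq_getElem (v : G → ℝ) (hk1 : 1 ≤ k) (hk2 : k ≤ Fintype.card G) :
    kthOrder v k = ((univ.val.map v).sort (· ≤ ·))[k - 1]'(by simp; omega) :=
  List.getD_eq_getElem _ _ _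

theorem kthOrder_lt_iff (v : G → ℝ) (hk1 : 1 ≤ k) (hk2 : k ≤ Fintype.card G) (c : ℝ) :
    kthOrder v k < c ↔ k ≤ #{g | v g < c} := by
  rw [kthOrder_eq_getElem v hk1 hk2,
    List.Pairwise.getElem_lt_iff_lt_countP (Multiset.pairwise_sort _ _), countP_sort_map_univ]
  omega

theorem card_kthOrder_lt_le (v : G → ℝ) (hk1 : 1 ≤ k) (hk2 : k ≤ Fintype.card G) :
    #{g | kthOrder v k < v g} ≤ Fintype.card G - k := by
  have h := (Multiset.pairwise_sort (univ.val.map v) (· ≤ ·)).countP_getElem_lt_le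
    (i := k - 1) (by simp; omega)
  rw [countP_sort_map_univ, ← kthOrder_eq_getElem v hk1 hk2] at h
  simpa [Nat.sub_add_cancel hk1] using h

theorem kthOrder_comp_equiv {H : Type*} [Fintype H] (v : G → ℝ) (e : H ≃ G) (k : ℕ) :
    kthOrder (v ∘ e) k = kthOrder v k := by
  rw [kthOrder, kthOrder, ← Multiset.map_map, Multiset.map_univ_val_equiv]

theorem kthOrder_smul_orbit {χ : Type*} [Group G] [MulAction G χ] (f : χ → ℝ) (k : ℕ) (h : G)
    (x : χ) : kthOrder (fun g : G => f (g • h • x)) k = kthOrder (fun g : G => f (g • x)) k := by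
  simpa [Function.comp_def, mul_smul] using
    kthOrder_comp_equiv (fun g => f (g • x)) (Equiv.mulRight h) k

theorem measurable_card_filter {ι α : Type*} [Fintype ι] [MeasurableSpace α]
    {p : ι → α → Prop} [∀ i x, Decidable (p i x)] (hp : ∀ i, MeasurableSet {x | p i x}) :
    Measurable fun x => #{i | p i x} := by
  simp_rw [card_filter]
  exact Finset.measurable_sum _ fun i _ => Measurable.ite (hp i) measurable_const measurable_const

theorem measurableSet_kthOrder_lt {α : Type*} [MeasurableSpace α] {v : α → G → ℝ} {w : α → ℝ}
    (hv : ∀ g, Measurable fun x => v x g) (hw : Measurable w) (hk1 : 1 ≤ k)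
    (hk2 : k ≤ Fintype.card G) : MeasurableSet {x | kthOrder (v x) k < w x} := by
  simp_rw [kthOrder_lt_iff _ hk1 hk2]
  exact measurableSet_le measurable_const
    (measurable_card_filter fun g => measurableSet_lt (hv g) hw)

end kthOrder

theorem card_mul_measure_preimage_le {Ω χ G : Type*} [MeasurableSpace Ω] [MeasurableSpace χ]
    [Fintype G] [SMul G χ] {μ : Measure Ω} {X : Ω → χ}
    (hact : ∀ g : G, Measurable fun x : χ => g • x) (hX : Measurable X)
    (hinv : ∀ g : G, μ.map (fun ω => g • X ω) = μ.map X) {A : Set χ} [DecidablePred (· ∈ A)]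
    (hA : MeasurableSet A) {m : ℕ} (hm : ∀ x, #{g : G | g • x ∈ A} ≤ m) :
    Fintype.card G * μ (X ⁻¹' A) ≤ m * μ Set.univ := by
  have hgX : ∀ g : G, Measurable fun ω => g • X ω := fun g => (hact g).comp hX
  have hE : ∀ g : G, MeasurableSet ((fun ω => g • X ω) ⁻¹' A) := fun g => hgX g hA
  calc Fintype.card G * μ (X ⁻¹' A) = ∑ g : G, μ ((fun ω => g • X ω) ⁻¹' A) := by
        have hmeas : ∀ g : G, μ ((fun ω => g • X ω) ⁻¹' A) = μ (X ⁻¹' A) := fun g => by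
          rw [← Measure.map_apply (hgX g) hA, ← Measure.map_apply hX hA, hinv g]
        simp [hmeas]
    _ = ∫⁻ ω, ∑ g : G, ((fun ω => g • X ω) ⁻¹' A).indicator 1 ω ∂μ := by
        rw [lintegral_finsetSum _ fun g _ => measurable_one.indicator (hE g)]
        simp_rw [lintegral_indicator_one (hE _)]
    _ = ∫⁻ ω, (#{g : G | g • X ω ∈ A} : ENNReal) ∂μ := by
        refine lintegral_congr fun ω => ?_
        rw [natCast_card_filter]
        exact sum_congr rfl fun g _ => by by_cases h : g • X ω ∈ A <;> simp [h]
    _ ≤ ∫⁻ _, (m : ENNReal) ∂μ := lintegral_mono fun ω => Nat.mono_cast (hm (X ω))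
    _ = m * μ Set.univ := lintegral_const _

/-- for a finite group `G` acting on the data space and a `G`-invariant data
distribution, the probability that `f(X)` exceeds the `k`-th order statistic of the
orbit values is at most `(|G| - k)/|G|`. -/
theorem stmt12 {Ω χ G : Type*} [MeasureSpace Ω] [IsProbabilityMeasure (ℙ : Measure Ω)]
    [MeasurableSpace χ] [Group G] [Fintype G] [MulAction G χ]
    (hact : ∀ g : G, Measurable (fun x : χ => g • x))
    (X : Ω → χ) (hX : Measurable X)
    (hinv : ∀ g : G, Measure.map (fun ω => g • X ω) ℙ = Measure.map X ℙ)
    (f : χ → ℝ) (hf : Measurable f)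
    (k : ℕ) (hk1 : 1 ≤ k) (hk2 : k ≤ Fintype.card G) :
    (ℙ {ω | kthOrder (fun g : G => f (g • X ω)) k < f (X ω)}).toReal
      ≤ ((Fintype.card G : ℝ) - k) / Fintype.card G := by
  set A : Set χ := {x | kthOrder (fun g : G => f (g • x)) k < f x}
  have hA : MeasurableSet A := measurableSet_kthOrder_lt (fun g => hf.comp (hact g)) hf hk1 hk2
  have hcount : ∀ x, #{h : G | h • x ∈ A} ≤ Fintype.card G - k := fun x => by
    simpa only [A, Set.mem_ofPred_eq, kthOrder_smul_orbit] using
      card_kthOrder_lt_le (fun g => f (g • x)) hk1 hk2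
  have hbound := card_mul_measure_preimage_le hact hX hinv hA hcount
  rw [measure_univ, mul_one] at hbound
  have hcard : (0 : ℝ) < Fintype.card G := by exact_mod_cast Fintype.card_pos
  rw [le_div_iff₀ hcard, ← Nat.cast_sub hk2, mul_comm]
  have hbound_real := ENNReal.toReal_mono (ENNReal.natCast_ne_top _) hbound
  rwa [ENNReal.toReal_mul, ENNReal.toReal_natCast, ENNReal.toReal_natCast] at hbound_real
end

section
/- Let Σ̂ = Û D̂ Û' and Σ̂^π = Û^π D̂^π Û^{π'} be eigendecompositions of symmetric positive semi-definite r×r matrices with rank(Σ̂) ≥ rank(Σ̂^π), and let θ̃^π = Û D̂^{1/2} ((D̂^π)^{1/2})^+ R Û^{π'} θ̂^π with R a diagonal ±1 matrix. Then the corrected Wald-type permutation statistic n θ̃^{π'} Σ̂^+ θ̃^π equals the naive permutation Wald statistic n θ̂^{π'} (Σ̂^π)^+ θ̂^π. -/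
/-!
Both statistics are quadratic forms in `θ̂^π`. Conjugating `Σ̂^+ = Û D̂^+ Û'` by the matrix
`Û D̂^{1/2} ((D̂^π)^{1/2})^+ R Û^{π'}` cancels `Û' Û = 1` and leaves `Û^π` times a diagonal matrix
times `Û^{π'}`, whose `i`-th entry is `dh i * (dh i)⁻¹ * (dhπ i)⁻¹` because `R² = 1`. This equals
`(dhπ i)⁻¹` as soon as `dhπ i ≠ 0 → dh i ≠ 0`; since both spectra are sorted decreasingly, their
supports are initial segments of `Fin r`, and this inclusion is exactly the rank hypothesis.
-/

open Matrix

theorem Matrix.rank_mul_diagonal_mul_transpose {m K : Type*} [Fintype m] [DecidableEq m]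
    [Field K] [DecidableEq K] (d : m → K) {U : Matrix m m K} (hU : Uᵀ * U = 1) :
    (U * diagonal d * Uᵀ).rank = Fintype.card {i // d i ≠ 0} := by
  have hdet : IsUnit U.det := isUnit_det_of_left_inverse hU
  rw [rank_mul_eq_left_of_isUnit_det _ _ (by rwa [det_transpose]),
    rank_mul_eq_right_of_isUnit_det _ _ hdet, rank_diagonal]

theorem Antitone.ne_zero_iff_lt_card_support {β : Type*} [PartialOrder β] [Zero β]
    [DecidableEq β] {r : ℕ} {d : Fin r → β} (hd : Antitone d) (h0 : ∀ i, 0 ≤ d i) (i : Fin r) :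
    d i ≠ 0 ↔ (i : ℕ) < Fintype.card {j // d j ≠ 0} := by
  rw [Fintype.card_subtype]
  constructor
  · intro hi
    have hsub : Finset.Iic i ⊆ ({j | d j ≠ 0} : Finset (Fin r)) := fun j hj =>
      Finset.mem_filter.2 ⟨Finset.mem_univ j, fun hdj =>
        hi (le_antisymm (hdj ▸ hd (Finset.mem_Iic.1 hj)) (h0 i))⟩
    simpa using Finset.card_le_card hsub
  · intro hlt hi
    have hsub : ({j | d j ≠ 0} : Finset (Fin r)) ⊆ Finset.Iio i := fun j hj =>
      Finset.mem_Iio.2 <| lt_of_not_ge fun hij =>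
        (Finset.mem_filter.1 hj).2 (le_antisymm (hi ▸ hd hij) (h0 j))
    simpa using (Finset.card_le_card hsub).trans_lt' hlt

theorem Matrix.dotProduct_mulVec_mulVec_mulVec {n R : Type*} [Fintype n] [CommSemiring R]
    (C S : Matrix n n R) (v : n → R) :
    C *ᵥ v ⬝ᵥ S *ᵥ (C *ᵥ v) = v ⬝ᵥ (Cᵀ * S * C) *ᵥ v := by
  rw [Matrix.mul_assoc, ← mulVec_mulVec, dotProduct_mulVec v, vecMul_transpose, mulVec_mulVec]

theorem Matrix.transpose_mul_diagonal_conj_diagonal {l m n R : Type*} [Fintype l] [Fintype m] [Fintype n]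
    [DecidableEq m] [CommSemiring R] {U : Matrix l m R} (hU : Uᵀ * U = 1) (V : Matrix n m R)
    (w c : m → R) :
    (U * diagonal w * Vᵀ)ᵀ * (U * diagonal c * Uᵀ) * (U * diagonal w * Vᵀ)
      = V * diagonal (fun i => w i * c i * w i) * Vᵀ := by
  have hcancel (X : Matrix m n R) : Uᵀ * (U * X) = X := by
    rw [← Matrix.mul_assoc, hU, Matrix.one_mul]
  simp only [transpose_mul, transpose_transpose, diagonal_transpose, Matrix.mul_assoc, hcancel]
  rw [← Matrix.mul_assoc (diagonal c), diagonal_mul_diagonal, ← Matrix.mul_assoc (diagonal w),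
    diagonal_mul_diagonal]
  simp only [mul_assoc]

theorem Real.sqrt_mul_inv_sqrt_mul_sign_conj_inv {a b σ : ℝ} (ha : 0 ≤ a) (hb : 0 ≤ b)
    (hσ : σ = 1 ∨ σ = -1) (hab : b ≠ 0 → a ≠ 0) :
    √a * (√b)⁻¹ * σ * a⁻¹ * (√a * (√b)⁻¹ * σ) = b⁻¹ := by
  have hσ2 : σ * σ = 1 := by rcases hσ with rfl | rfl <;> norm_num
  calc √a * (√b)⁻¹ * σ * a⁻¹ * (√a * (√b)⁻¹ * σ)
      = (√a * √a) * a⁻¹ * ((√b * √b)⁻¹ * (σ * σ)) := by ring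
    _ = a * a⁻¹ * b⁻¹ := by rw [Real.mul_self_sqrt ha, Real.mul_self_sqrt hb, hσ2, mul_one]
    _ = b⁻¹ := by
      rcases eq_or_ne b 0 with rfl | hb0
      · simp
      · rw [mul_inv_cancel₀ (hab hb0), one_mul]

theorem stmt18_general {r : ℕ} (N : ℝ)
    (dh dhπ : Fin r → ℝ) (h0 : ∀ i, 0 ≤ dh i) (h0π : ∀ i, 0 ≤ dhπ i)
    (hmono : Antitone dh) (hmonoπ : Antitone dhπ)
    (Uh Uhπ : Matrix (Fin r) (Fin r) ℝ)
    (hUh1 : Uhᵀ * Uh = 1)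
    (hUhπ1 : Uhπᵀ * Uhπ = 1)
    (hrank : (Uhπ * Matrix.diagonal dhπ * Uhπᵀ).rank ≤ (Uh * Matrix.diagonal dh * Uhᵀ).rank)
    (s : Fin r → ℝ) (hs : ∀ i, s i = 1 ∨ s i = -1)
    (θ : Fin r → ℝ) :
    letI θt := (Uh * Matrix.diagonal (fun i => Real.sqrt (dh i))
        * Matrix.diagonal (fun i => if dhπ i = 0 then 0 else (Real.sqrt (dhπ i))⁻¹)
        * Matrix.diagonal s * Uhπᵀ).mulVec θ
    N * (θt ⬝ᵥ (Uh * Matrix.diagonal (fun i => if dh i = 0 then 0 else (dh i)⁻¹)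
          * Uhᵀ).mulVec θt)
      = N * (θ ⬝ᵥ (Uhπ * Matrix.diagonal (fun i => if dhπ i = 0 then 0 else (dhπ i)⁻¹)
          * Uhπᵀ).mulVec θ) := by
  rw [rank_mul_diagonal_mul_transpose dhπ hUhπ1, rank_mul_diagonal_mul_transpose dh hUh1] at hrank
  have hsupp (i : Fin r) (hi : dhπ i ≠ 0) : dh i ≠ 0 :=
    (hmono.ne_zero_iff_lt_card_support h0 i).2 <|
      ((hmonoπ.ne_zero_iff_lt_card_support h0π i).1 hi).trans_le hrank
  -- the pseudo-inverses are plain inverses in `ℝ`, where `0⁻¹ = 0` and `√0 = 0`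
  have hpinv (x : ℝ) : (if x = 0 then 0 else x⁻¹) = x⁻¹ := by split_ifs with h <;> simp [h]
  have hpinvSqrt (x : ℝ) : (if x = 0 then 0 else (√x)⁻¹) = (√x)⁻¹ := by
    split_ifs with h <;> simp [h]
  simp only [hpinv, hpinvSqrt]
  have hcombine : Uh * diagonal (fun i => √(dh i)) * diagonal (fun i => (√(dhπ i))⁻¹) * diagonal s
      * Uhπᵀ = Uh * diagonal (fun i => √(dh i) * (√(dhπ i))⁻¹ * s i) * Uhπᵀ := by
    simp only [Matrix.mul_assoc, diagonal_mul_diagonal]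
  rw [hcombine, dotProduct_mulVec_mulVec_mulVec, transpose_mul_diagonal_conj_diagonal hUh1,
    diagonal_eq_diagonal_iff.2 fun i =>
      Real.sqrt_mul_inv_sqrt_mul_sign_conj_inv (h0 i) (h0π i) (hs i) (hsupp i)]

/-- the corrected Wald-type permutation statistic equals the naive permutation
Wald statistic. -/
theorem stmt18 {r : ℕ} (N : ℝ)
    (dh dhπ : Fin r → ℝ) (h0 : ∀ i, 0 ≤ dh i) (h0π : ∀ i, 0 ≤ dhπ i)
    (hmono : Antitone dh) (hmonoπ : Antitone dhπ)
    (Uh Uhπ : Matrix (Fin r) (Fin r) ℝ)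
    (hUh1 : Uhᵀ * Uh = 1) (hUh2 : Uh * Uhᵀ = 1)
    (hUhπ1 : Uhπᵀ * Uhπ = 1) (hUhπ2 : Uhπ * Uhπᵀ = 1)
    (hrank : (Uhπ * Matrix.diagonal dhπ * Uhπᵀ).rank ≤ (Uh * Matrix.diagonal dh * Uhᵀ).rank)
    (s : Fin r → ℝ) (hs : ∀ i, s i = 1 ∨ s i = -1)
    (θ : Fin r → ℝ) :
    letI θt := (Uh * Matrix.diagonal (fun i => Real.sqrt (dh i))
        * Matrix.diagonal (fun i => if dhπ i = 0 then 0 else (Real.sqrt (dhπ i))⁻¹)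
        * Matrix.diagonal s * Uhπᵀ).mulVec θ
    N * (θt ⬝ᵥ (Uh * Matrix.diagonal (fun i => if dh i = 0 then 0 else (dh i)⁻¹)
          * Uhᵀ).mulVec θt)
      = N * (θ ⬝ᵥ (Uhπ * Matrix.diagonal (fun i => if dhπ i = 0 then 0 else (dhπ i)⁻¹)
          * Uhπᵀ).mulVec θ) :=
  stmt18_general N dh dhπ h0 h0π hmono hmonoπ Uh Uhπ hUh1 hUhπ1 hrank s hs θ
end
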